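/- arXiv:2202.07549 — 5 statements merged into one kernel-verified Lean document; each statement's English description precedes it below -/
import Mathlib

section
/- Let Y : Ω → ℝ^M be a measurable random vector, let α ∈ (0, 1], and suppose z ∈ MVaR_α(Y) satisfies z_i > 0 for every coordinate i. Define w ∈ ℝ^M by w_i = (1/z_i) / (∑_{j=1}^M 1/z_j) and v = (∑_{j=1}^M 1/z_j)^{-1}. Then w ∈ Δ_+^{M-1}, z = v/w, and VaR_α(s[Y, w]) = v. -/
open MeasureTheory

/-- Value-at-risk at confidence level `α`:
`VaR_α(Z) = sup {t : ℝ | P(Z ≥ t) ≥ α}`. -/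
noncomputable def VaR {Ω : Type*} [MeasurableSpace Ω] (P : Measure Ω) (Z : Ω → ℝ) (α : ℝ) : ℝ :=
  sSup {t : ℝ | ENNReal.ofReal α ≤ P {ω | t ≤ Z ω}}

/-- Chebyshev scalarization: `s[y, w] = min_i w i * y i`. -/
noncomputable def cheb {M : ℕ} (y w : Fin M → ℝ) : ℝ := ⨅ i, w i * y i

/-- Pareto dominance: `y ≻ y'` iff `y ≥ y'` and `y j > y' j` for some `j`. -/
def ParetoDom {M : ℕ} (y y' : Fin M → ℝ) : Prop := (∀ i, y' i ≤ y i) ∧ ∃ j, y' j < y j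

/-- If `z ∈ MVaR_α(Y)` has strictly positive coordinates, then with
`w i = (1 / z i) / ∑ j, 1 / z j` and `v = (∑ j, 1 / z j)⁻¹`, `w` lies in the positive
simplex, `z = v / w`, and `VaR_α(s[Y, w]) = v`. -/
theorem stmt_5 {Ω : Type*} [MeasurableSpace Ω] (P : Measure Ω) [IsProbabilityMeasure P]
    {M : ℕ} (hM : 1 ≤ M) (Y : Ω → Fin M → ℝ) (hY : Measurable Y)
    (α : ℝ) (hα0 : 0 < α) (hα1 : α ≤ 1)
    (z : Fin M → ℝ)
    (hzA : ENNReal.ofReal α ≤ P {ω | ∀ i, z i ≤ Y ω i})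
    (hznd : ∀ z' : Fin M → ℝ, ENNReal.ofReal α ≤ P {ω | ∀ i, z' i ≤ Y ω i} →
      ¬ ParetoDom z' z)
    (hzpos : ∀ i, 0 < z i)
    (w : Fin M → ℝ) (hw : w = fun i => (1 / z i) / ∑ j, 1 / z j)
    (v : ℝ) (hv : v = (∑ j, 1 / z j)⁻¹) :
    ((∀ i, 0 < w i) ∧ (∑ i, w i) = 1) ∧
    z = (fun i => v / w i) ∧
    VaR P (fun ω => cheb (Y ω) w) α = v := by
  have hMne : Nonempty (Fin M) := ⟨⟨0, hM⟩⟩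
  set S : ℝ := ∑ j, 1 / z j with hS
  have hSpos : 0 < S := by
    apply Finset.sum_pos
    · intro i _
      exact one_div_pos.mpr (hzpos i)
    · exact ⟨⟨0, hM⟩, Finset.mem_univ _⟩
  have hwpos : ∀ i, 0 < w i := by
    intro i
    rw [hw]
    exact div_pos (one_div_pos.mpr (hzpos i)) hSpos
  have hwsum : (∑ i, w i) = 1 := by
    rw [hw]
    rw [← Finset.sum_div]
    exact div_self (ne_of_gt hSpos)
  have hvpos : 0 < v := by rw [hv]; exact inv_pos.mpr hSpos
  have hwz : ∀ i, w i * z i = v := by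
    intro i
    rw [hw, hv]
    have := (hzpos i).ne'
    field_simp
  have hzeq : z = fun i => v / w i := by
    funext i
    rw [eq_div_iff (hwpos i).ne', mul_comm, hwz i]
  refine ⟨⟨hwpos, hwsum⟩, hzeq, ?_⟩
  -- VaR part
  have hbdd : ∀ ω, BddBelow (Set.range fun i => w i * Y ω i) :=
    fun ω => (Set.finite_range _).bddBelow
  have hvmem : ENNReal.ofReal α ≤ P {ω | v ≤ cheb (Y ω) w} := by
    refine le_trans hzA (measure_mono ?_)
    intro ω hω
    simp only [Set.mem_setOf_eq] at hω ⊢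
    refine le_ciInf fun i => ?_
    calc v = w i * z i := (hwz i).symm
    _ ≤ w i * Y ω i := mul_le_mul_of_nonneg_left (hω i) (hwpos i).le
  have hub : ∀ t ∈ {t : ℝ | ENNReal.ofReal α ≤ P {ω | t ≤ cheb (Y ω) w}}, t ≤ v := by
    intro t ht
    by_contra hlt
    push_neg at hlt
    set z' : Fin M → ℝ := fun i => t / w i with hz'
    have hz'A : ENNReal.ofReal α ≤ P {ω | ∀ i, z' i ≤ Y ω i} := by
      refine le_trans ht (measure_mono ?_)
      intro ω hω i
      simp only [Set.mem_setOf_eq] at hω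
      have h1 : t ≤ w i * Y ω i := le_trans hω (ciInf_le (hbdd ω) i)
      rw [hz']
      rw [div_le_iff₀ (hwpos i)]
      linarith [h1]
    refine hznd z' hz'A ⟨fun i => ?_, ⟨⟨0, hM⟩, ?_⟩⟩
    · rw [hzeq, hz']
      simp only
      gcongr
      exact (hwpos i).le
    · rw [hzeq, hz']
      simp only
      exact (div_lt_div_iff_of_pos_right (hwpos ⟨0, hM⟩)).mpr hlt
  apply le_antisymm
  · exact csSup_le ⟨v, hvmem⟩ hub
  · exact le_csSup ⟨v, hub⟩ hvmem
end

section
/- Let X be a nonempty set and for each x ∈ X let Y_x : Ω → ℝ^M be a measurable random vector whose survival function is strictly decreasing with respect to Pareto dominance. Let α ∈ (0, 1] and suppose z belongs to the global MVaR over X and has all coordinates strictly positive. Define w ∈ Δ_+^{M-1} by w_i = (1/z_i)/(∑_{j=1}^M 1/z_j), and let X_z* = {x ∈ X : z ∈ MVaR_α(Y_x)}. Then for every x ∈ X_z*, VaR_α(s[Y_x, w]) = (∑_{j=1}^M 1/z_j)^{-1}, and for every x' ∈ X, VaR_α(s[Y_{x'}, w]) ≤ VaR_α(s[Y_x, w]);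 that is, every x ∈ X_z* maximizes x ↦ VaR_α(s[Y_x, w]) over X. -/
open MeasureTheory

/-- `A_α(Y) = {z | P(Y ≥ z) ≥ α}`. -/
def Aset {Ω : Type*} [MeasurableSpace Ω] (P : Measure Ω) {M : ℕ} (Y : Ω → Fin M → ℝ)
    (α : ℝ) : Set (Fin M → ℝ) :=
  {z | ENNReal.ofReal α ≤ P {ω | ∀ i, z i ≤ Y ω i}}

/-- `MVaR_α(Y)`: elements of `A_α(Y)` not Pareto-dominated by any element of `A_α(Y)`. -/
def MVaRset {Ω : Type*} [MeasurableSpace Ω] (P : Measure Ω) {M : ℕ} (Y : Ω → Fin M → ℝ)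
    (α : ℝ) : Set (Fin M → ℝ) :=
  {z ∈ Aset P Y α | ∀ z' ∈ Aset P Y α, ¬ ParetoDom z' z}

section AuxStmt8

open Filter

variable {Ω : Type*} [MeasurableSpace Ω] {M : ℕ}

lemma stmt8_measSet {Y : Ω → Fin M → ℝ} (hY : Measurable Y) (v : Fin M → ℝ) :
    MeasurableSet {ω | ∀ i, v i ≤ Y ω i} := by
  have h : {ω | ∀ i, v i ≤ Y ω i} = ⋂ i, {ω | v i ≤ Y ω i} := by
    ext ω; simp [Set.mem_iInter]
  rw [h]
  exact MeasurableSet.iInter fun i =>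
    measurableSet_le measurable_const ((measurable_pi_apply i).comp hY)

lemma stmt8_Aset_bdd (P : Measure Ω) [IsProbabilityMeasure P] {Y : Ω → Fin M → ℝ}
    (hY : Measurable Y) {α : ℝ} (hα0 : 0 < α) (i : Fin M) :
    ∃ B : ℝ, ∀ y ∈ Aset P Y α, y i ≤ B := by
  have hmeas : ∀ n : ℕ, NullMeasurableSet {ω | (n : ℝ) ≤ Y ω i} P := fun n =>
    (measurableSet_le measurable_const ((measurable_pi_apply i).comp hY)).nullMeasurableSet
  have hanti : Antitone (fun n : ℕ => {ω | (n : ℝ) ≤ Y ω i}) := by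
    intro a b hab ω hω
    simp only [Set.mem_setOf_eq] at hω ⊢
    exact le_trans (Nat.cast_le.mpr hab) hω
  have hint : (⋂ n : ℕ, {ω | (n : ℝ) ≤ Y ω i}) = ∅ := by
    ext ω
    simp only [Set.mem_iInter, Set.mem_setOf_eq, Set.mem_empty_iff_false, iff_false, not_forall]
    obtain ⟨n, hn⟩ := exists_nat_gt (Y ω i)
    exact ⟨n, not_le.mpr hn⟩
  have htend := tendsto_measure_iInter_atTop (μ := P) hmeas hanti ⟨0, measure_ne_top P _⟩
  rw [hint, measure_empty] at htend
  have hev : ∀ᶠ n : ℕ in atTop, P {ω | (n : ℝ) ≤ Y ω i} < ENNReal.ofReal α :=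
    htend.eventually_lt_const (by simpa using ENNReal.ofReal_pos.mpr hα0)
  obtain ⟨n, hn⟩ := hev.exists
  refine ⟨n, fun y hy => ?_⟩
  by_contra hlt
  push_neg at hlt
  have hsub : {ω | ∀ j, y j ≤ Y ω j} ⊆ {ω | (n : ℝ) ≤ Y ω i} :=
    fun ω hω => le_trans hlt.le (hω i)
  exact absurd (le_trans hy (measure_mono hsub)) (not_le.mpr hn)

lemma stmt8_chain_ub {c : Set (Fin M → ℝ)} (hc : IsChain (· ≤ ·) c) {ι : Type*}
    [DecidableEq ι] (s : Finset ι) (f : ι → Fin M → ℝ) :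
    (∀ i ∈ s, f i ∈ c) → s.Nonempty → ∃ g ∈ c, ∀ i ∈ s, f i ≤ g := by
  induction s using Finset.induction_on with
  | empty => intro _ hne; exact absurd hne (by simp)
  | @insert a s ha ih =>
    intro hf _
    rcases s.eq_empty_or_nonempty with rfl | hne
    · exact ⟨f a, hf a (Finset.mem_insert_self a ∅), by simp⟩
    · obtain ⟨g, hg, hgb⟩ := ih (fun i hi => hf i (Finset.mem_insert_of_mem hi)) hne
      have hfa := hf a (Finset.mem_insert_self a s)
      rcases eq_or_ne (f a) g with heq | hne'
      · refine ⟨g, hg, fun i hi => ?_⟩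
        rcases Finset.mem_insert.mp hi with rfl | hi
        · exact heq.le
        · exact hgb i hi
      · rcases hc hfa hg hne' with h | h
        · refine ⟨g, hg, fun i hi => ?_⟩
          rcases Finset.mem_insert.mp hi with rfl | hi
          · exact h
          · exact hgb i hi
        · refine ⟨f a, hfa, fun i hi => ?_⟩
          rcases Finset.mem_insert.mp hi with rfl | hi
          · exact le_rfl
          · exact (hgb i hi).trans h

lemma stmt8_exists_mvar_ge (P : Measure Ω) [IsProbabilityMeasure P] [Nonempty (Fin M)]
    {Y : Ω → Fin M → ℝ} (hY : Measurable Y) {α : ℝ} (hα0 : 0 < α)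
    {z0 : Fin M → ℝ} (hz0 : z0 ∈ Aset P Y α) :
    ∃ m ∈ MVaRset P Y α, ∀ i, z0 i ≤ m i := by
  classical
  set S : Set (Fin M → ℝ) := {y | y ∈ Aset P Y α ∧ ∀ i, z0 i ≤ y i} with hS
  have hzorn : ∃ m, z0 ≤ m ∧ Maximal (· ∈ S) m := by
    refine zorn_le_nonempty₀ S ?_ z0 ⟨hz0, fun i => le_rfl⟩
    intro c hcS hchain y hyC
    have hbdd : ∀ i, BddAbove ((fun g => g i) '' c) := by
      intro i
      obtain ⟨B, hB⟩ := stmt8_Aset_bdd P hY hα0 i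
      exact ⟨B, by rintro r ⟨g, hg, rfl⟩; exact hB g (hcS hg).1⟩
    have hne : ∀ i, ((fun g : Fin M → ℝ => g i) '' c).Nonempty := fun i => ⟨y i, y, hyC, rfl⟩
    set F : Fin M → ℝ := fun i => sSup ((fun g => g i) '' c) with hF
    have hleF : ∀ g ∈ c, g ≤ F := fun g hg i => le_csSup (hbdd i) ⟨g, hg, rfl⟩
    -- a sequence in the chain approaching F coordinatewise
    have hseq : ∀ n : ℕ, ∃ g ∈ c, ∀ i, F i - 1 / (n + 1) < g i := by
      intro n
      have hpick : ∀ i, ∃ g ∈ c, F i - 1 / (n + 1) < g i := by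
        intro i
        have hlt : F i - 1 / (n + 1) < sSup ((fun g : Fin M → ℝ => g i) '' c) := by
          have : (0 : ℝ) < 1 / (n + 1) := by positivity
          simpa [hF] using sub_lt_self (F i) this
        obtain ⟨r, hr, hrlt⟩ := exists_lt_of_lt_csSup (hne i) hlt
        obtain ⟨g, hg, rfl⟩ := hr
        exact ⟨g, hg, hrlt⟩
      choose gg hggC hgglt using hpick
      obtain ⟨g, hg, hgb⟩ :=
        stmt8_chain_ub hchain Finset.univ gg (fun i _ => hggC i) Finset.univ_nonempty
      exact ⟨g, hg, fun i => lt_of_lt_of_le (hgglt i) (hgb i (Finset.mem_univ i) i)⟩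
    choose g hgC hglt using hseq
    -- continuity from above on partial intersections
    have hmeas : ∀ n : ℕ, NullMeasurableSet {ω | ∀ i, g n i ≤ Y ω i} P :=
      fun n => (stmt8_measSet hY (g n)).nullMeasurableSet
    have htend := tendsto_measure_iInter_le (μ := P) (f := fun n => {ω | ∀ i, g n i ≤ Y ω i})
      hmeas ⟨0, measure_ne_top P _⟩
    have hpart : ∀ n : ℕ, ENNReal.ofReal α ≤ P (⋂ j ≤ n, {ω | ∀ i, g j i ≤ Y ω i}) := by
      intro n
      obtain ⟨h, hhC, hhb⟩ := stmt8_chain_ub hchain (Finset.range (n + 1)) g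
        (fun j _ => hgC j) ⟨0, Finset.mem_range.mpr (Nat.succ_pos n)⟩
      have hsub : {ω | ∀ i, h i ≤ Y ω i} ⊆ ⋂ j ≤ n, {ω | ∀ i, g j i ≤ Y ω i} := by
        intro ω hω
        simp only [Set.mem_iInter, Set.mem_setOf_eq]
        intro j hj i
        exact le_trans (hhb j (Finset.mem_range.mpr (Nat.lt_succ_of_le hj)) i) (hω i)
      exact le_trans (hcS hhC).1 (measure_mono hsub)
    have hiInter : ENNReal.ofReal α ≤ P (⋂ n, {ω | ∀ i, g n i ≤ Y ω i}) :=
      ge_of_tendsto htend (Filter.Eventually.of_forall hpart)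
    have hFsub : (⋂ n, {ω | ∀ i, g n i ≤ Y ω i}) ⊆ {ω | ∀ i, F i ≤ Y ω i} := by
      intro ω hω i
      by_contra hlt
      push_neg at hlt
      obtain ⟨n, hn⟩ := exists_nat_one_div_lt (sub_pos.mpr hlt)
      have h1 : F i - 1 / (n + 1) < Y ω i := lt_of_lt_of_le (hglt n i)
        ((Set.mem_iInter.mp hω n) i)
      have h2 : 1 / ((n : ℝ) + 1) < F i - Y ω i := hn
      linarith
    have hFA : F ∈ Aset P Y α := le_trans hiInter (measure_mono hFsub)
    refine ⟨F, ⟨hFA, fun i => le_trans ((hcS hyC).2 i) (hleF y hyC i)⟩, hleF⟩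
  obtain ⟨m, hz0m, hmax⟩ := hzorn
  refine ⟨m, ⟨hmax.1.1, fun z' hz' hdom => ?_⟩, fun i => hz0m i⟩
  obtain ⟨hle, j, hj⟩ := hdom
  have hz'S : z' ∈ S := ⟨hz', fun i => le_trans (hmax.1.2 i) (hle i)⟩
  have hle' : m ≤ z' := fun i => hle i
  exact absurd (hmax.2 hz'S hle' j) (not_le.mpr hj)

lemma stmt8_cheb_set_eq [Nonempty (Fin M)] {Y' : Ω → Fin M → ℝ} {w : Fin M → ℝ}
    (hw : ∀ i, 0 < w i) (t : ℝ) :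
    {ω | t ≤ cheb (Y' ω) w} = {ω | ∀ i, t / w i ≤ Y' ω i} := by
  ext ω
  simp only [Set.mem_setOf_eq, cheb]
  rw [le_ciInf_iff (Set.finite_range _).bddBelow]
  refine forall_congr' fun i => ?_
  rw [div_le_iff₀ (hw i), mul_comm]

end AuxStmt8

/-- Consistent optimizers: if `z` belongs to the global `MVaR` over a family
`{Y_x}` (i.e. `z` lies in `⋃ x, MVaR_α(Y x)` and is not Pareto-dominated by any element of
that union) and has strictly positive coordinates, then with
`w i = (1 / z i) / ∑ j, 1 / z j`, every `x` with `z ∈ MVaR_α(Y x)` achieves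
`VaR_α(s[Y x, w]) = (∑ j, 1 / z j)⁻¹` and maximizes `x ↦ VaR_α(s[Y x, w])` over `X`. -/
theorem stmt_8 {Ω X : Type*} [MeasurableSpace Ω] (P : Measure Ω) [IsProbabilityMeasure P]
    [Nonempty X] {M : ℕ} (hM : 1 ≤ M) (Y : X → Ω → Fin M → ℝ)
    (hY : ∀ x, Measurable (Y x))
    (hstrict : ∀ x, ∀ z z' : Fin M → ℝ, ParetoDom z z' →
      P {ω | ∀ i, z i ≤ Y x ω i} < P {ω | ∀ i, z' i ≤ Y x ω i})
    (α : ℝ) (hα0 : 0 < α) (hα1 : α ≤ 1)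
    (z : Fin M → ℝ)
    (hzU : z ∈ ⋃ x, MVaRset P (Y x) α)
    (hznd : ∀ z' ∈ ⋃ x, MVaRset P (Y x) α, ¬ ParetoDom z' z)
    (hzpos : ∀ i, 0 < z i)
    (w : Fin M → ℝ) (hw : w = fun i => (1 / z i) / ∑ j, 1 / z j) :
    ∀ x, z ∈ MVaRset P (Y x) α →
      VaR P (fun ω => cheb (Y x ω) w) α = (∑ j, 1 / z j)⁻¹ ∧
      ∀ x', VaR P (fun ω => cheb (Y x' ω) w) α ≤ VaR P (fun ω => cheb (Y x ω) w) α := by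
  intro x hx
  haveI : Nonempty (Fin M) := ⟨⟨0, hM⟩⟩
  have hcpos : (0:ℝ) < ∑ j, 1 / z j :=
    Finset.sum_pos (fun j _ => one_div_pos.mpr (hzpos j)) Finset.univ_nonempty
  have hwpos : ∀ i, 0 < w i := by
    intro i; rw [hw]; exact div_pos (one_div_pos.mpr (hzpos i)) hcpos
  have hwz : ∀ i, (∑ j, 1 / z j)⁻¹ / w i = z i := by
    intro i
    rw [hw]
    have h1 : z i ≠ 0 := (hzpos i).ne'
    have h2 : (∑ j, 1 / z j) ≠ 0 := hcpos.ne'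
    field_simp
  have hub : ∀ x' t, ENNReal.ofReal α ≤ P {ω | t ≤ cheb (Y x' ω) w} →
      t ≤ (∑ j, 1 / z j)⁻¹ := by
    intro x' t ht
    by_contra hlt
    push_neg at hlt
    rw [stmt8_cheb_set_eq hwpos] at ht
    have hzA : (fun i => t / w i) ∈ Aset P (Y x') α := ht
    obtain ⟨m, hmM, hmge⟩ := stmt8_exists_mvar_ge P (hY x') hα0 hzA
    refine hznd m (Set.mem_iUnion.mpr ⟨x', hmM⟩) ?_
    have hgt : ∀ i, z i < t / w i := by
      intro i
      rw [← hwz i]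
      exact (div_lt_div_iff_of_pos_right (hwpos i)).mpr hlt
    exact ⟨fun i => ((hgt i).le).trans (hmge i),
      ⟨⟨0, hM⟩, lt_of_lt_of_le (hgt ⟨0, hM⟩) (hmge ⟨0, hM⟩)⟩⟩
  have hBdd : BddAbove {t | ENNReal.ofReal α ≤ P {ω | t ≤ cheb (Y x ω) w}} :=
    ⟨(∑ j, 1 / z j)⁻¹, fun t ht => hub x t ht⟩
  have hmem : (∑ j, 1 / z j)⁻¹ ∈ {t | ENNReal.ofReal α ≤ P {ω | t ≤ cheb (Y x ω) w}} := by
    rw [Set.mem_setOf_eq, stmt8_cheb_set_eq hwpos]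
    have hset : {ω | ∀ i, (∑ j, 1 / z j)⁻¹ / w i ≤ Y x ω i} = {ω | ∀ i, z i ≤ Y x ω i} := by
      ext ω; refine forall_congr' fun i => ?_; rw [hwz i]
    rw [hset]
    exact hx.1
  have hVaRx : VaR P (fun ω => cheb (Y x ω) w) α = (∑ j, 1 / z j)⁻¹ := by
    apply le_antisymm
    · exact Real.sSup_le (fun t ht => hub x t ht) (inv_nonneg.mpr hcpos.le)
    · exact le_csSup hBdd hmem
  refine ⟨hVaRx, fun x' => ?_⟩
  rw [hVaRx]
  exact Real.sSup_le (fun t ht => hub x' t ht) (inv_nonneg.mpr hcpos.le)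
end

section
/- Let Y : Ω → ℝ^M and C : Ω → ℝ^V be measurable random vectors with Y_i(ω) > 0 for every i and P-almost every ω, and let W be the feasibility-weighted random vector obtained from Y and C. Let α ∈ (0, 1] and suppose z ∈ MVaR_α(W). Then z_i ≥ 0 for every i, and z = 0 if and only if z does not Pareto-dominate the zero vector. -/
open MeasureTheory

/-- Feasibility-weighted random vector: `W ω = Y ω` if all constraints `C ω` are strictly
positive, and `W ω = 0` otherwise. -/
noncomputable def fw {Ω : Type*} {M V : ℕ} (Y : Ω → Fin M → ℝ) (C : Ω → Fin V → ℝ) :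
    Ω → Fin M → ℝ :=
  fun ω i => if ∀ j, 0 < C ω j then Y ω i else 0

/-- If `Y` has a.e. strictly positive coordinates and
`z ∈ MVaR_α(W)` for the feasibility-weighted vector `W`, then `z` is componentwise
nonnegative and `z = 0` iff `z` does not Pareto-dominate the zero vector. -/
theorem stmt_11 {Ω : Type*} [MeasurableSpace Ω] (P : Measure Ω) [IsProbabilityMeasure P]
    {M V : ℕ} (hM : 1 ≤ M) (hV : 1 ≤ V)
    (Y : Ω → Fin M → ℝ) (hY : Measurable Y) (C : Ω → Fin V → ℝ) (hC : Measurable C)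
    (hYpos : ∀ᵐ ω ∂P, ∀ i, 0 < Y ω i)
    (α : ℝ) (hα0 : 0 < α) (hα1 : α ≤ 1)
    (z : Fin M → ℝ) (hz : z ∈ MVaRset P (fw Y C) α) :
    (∀ i, 0 ≤ z i) ∧ (z = 0 ↔ ¬ ParetoDom z 0) := by
  obtain ⟨hzA, hzmax⟩ := hz
  have hWpos : ∀ᵐ ω ∂P, ∀ i, 0 ≤ fw Y C ω i := by
    filter_upwards [hYpos] with ω h i
    unfold fw
    split
    · exact (h i).le
    · exact le_refl 0
  have hnn : ∀ i, 0 ≤ z i := by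
    by_contra h
    push_neg at h
    obtain ⟨i, hi⟩ := h
    set z' : Fin M → ℝ := fun j => max (z j) 0 with hz'
    have hz'A : z' ∈ Aset P (fw Y C) α := by
      refine le_trans hzA (measure_mono_ae ?_)
      filter_upwards [hWpos] with ω hw hzle j
      exact max_le (hzle j) (hw j)
    exact hzmax z' hz'A ⟨fun j => le_max_left _ _, ⟨i, lt_max_of_lt_right hi⟩⟩
  refine ⟨hnn, ?_, ?_⟩
  · rintro rfl ⟨_, j, hj⟩
    simp at hj
  · intro hnd
    funext i
    by_contra hne
    exact hnd ⟨fun j => hnn j, ⟨i, lt_of_le_of_ne (hnn i) (by simpa using Ne.symm hne)⟩⟩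
end

section
/- Let Y : Ω → ℝ^M and C : Ω → ℝ^V be measurable random vectors with Y_i(ω) > 0 for every i and P-almost every ω, let W be the feasibility-weighted random vector obtained from Y and C, and let α ∈ (0, 1]. Then: (i) if the zero vector belongs to MVaR_α(W), then VaR_α(s[W, w]) = 0 for every w ∈ Δ_+^{M-1}; and (ii) if z ∈ MVaR_α(W) satisfies z_i > 0 for every i, then setting w_i = (1/z_i)/(∑_{j=1}^M 1/z_j) and v = (∑_{j=1}^M 1/z_j)^{-1}, one has w ∈ Δ_+^{M-1}, z = v/w, and VaR_α(s[W, w]) = v. -/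
open MeasureTheory

private lemma var_cheb_key {Ω : Type*} [MeasurableSpace Ω] (P : Measure Ω)
    [IsProbabilityMeasure P] {M : ℕ} (hM : 1 ≤ M) (W : Ω → Fin M → ℝ) (α : ℝ)
    (z : Fin M → ℝ) (hz : z ∈ MVaRset P W α) (w : Fin M → ℝ) (hw : ∀ i, 0 < w i)
    (v : ℝ) (hv : ∀ i, w i * z i = v) :
    VaR P (fun ω => cheb (W ω) w) α = v := by
  haveI : Nonempty (Fin M) := ⟨⟨0, hM⟩⟩
  have hvS : ENNReal.ofReal α ≤ P {ω | v ≤ cheb (W ω) w} := by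
    refine le_trans hz.1 (measure_mono ?_)
    intro ω hω
    simp only [cheb, Set.mem_setOf_eq]
    refine le_ciInf fun i => ?_
    rw [← hv i]
    exact mul_le_mul_of_nonneg_left (hω i) (hw i).le
  have hub : ∀ t ∈ {t : ℝ | ENNReal.ofReal α ≤ P {ω | t ≤ cheb (W ω) w}}, t ≤ v := by
    intro t ht
    by_contra hlt
    push_neg at hlt
    have hmem : (fun i => t / w i) ∈ Aset P W α := by
      refine le_trans ht (measure_mono ?_)
      intro ω hω i
      have h1 : t ≤ w i * W ω i :=
        le_trans hω (ciInf_le (Set.Finite.bddBelow (Set.finite_range _)) i)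
      rw [div_le_iff₀ (hw i)]
      linarith [h1]
    refine hz.2 _ hmem ⟨fun i => ?_, ⟨⟨0, hM⟩, ?_⟩⟩
    · have : z i = v / w i := by
        rw [← hv i, mul_comm, mul_div_assoc, div_self (hw i).ne', mul_one]
      rw [this]
      exact (div_lt_div_of_pos_right hlt (hw i)).le
    · have : z ⟨0, hM⟩ = v / w ⟨0, hM⟩ := by
        rw [← hv ⟨0, hM⟩, mul_comm, mul_div_assoc, div_self (hw _).ne', mul_one]
      rw [this]
      exact div_lt_div_of_pos_right hlt (hw _)
  exact le_antisymm (csSup_le ⟨v, hvS⟩ hub) (le_csSup ⟨v, hub⟩ hvS)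

/-- for the feasibility-weighted vector `W` of `(Y, C)` with `Y` a.e.
strictly positive: (i) if `0 ∈ MVaR_α(W)` then `VaR_α(s[W, w]) = 0` for every `w` in the
positive simplex; (ii) every `z ∈ MVaR_α(W)` with strictly positive coordinates equals
`v / w` for `w i = (1 / z i) / ∑ j, 1 / z j` and `v = (∑ j, 1 / z j)⁻¹`, with `w` in the
positive simplex and `VaR_α(s[W, w]) = v`. -/
theorem stmt_13 {Ω : Type*} [MeasurableSpace Ω] (P : Measure Ω) [IsProbabilityMeasure P]
    {M V : ℕ} (hM : 1 ≤ M) (hV : 1 ≤ V)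
    (Y : Ω → Fin M → ℝ) (hY : Measurable Y) (C : Ω → Fin V → ℝ) (hC : Measurable C)
    (hYpos : ∀ᵐ ω ∂P, ∀ i, 0 < Y ω i)
    (α : ℝ) (hα0 : 0 < α) (hα1 : α ≤ 1) :
    ((0 : Fin M → ℝ) ∈ MVaRset P (fw Y C) α →
      ∀ w : Fin M → ℝ, (∀ i, 0 < w i) → (∑ i, w i) = 1 →
        VaR P (fun ω => cheb (fw Y C ω) w) α = 0) ∧
    (∀ z ∈ MVaRset P (fw Y C) α, (∀ i, 0 < z i) →
      ((∀ i, 0 < ((1 / z i) / ∑ j, 1 / z j)) ∧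
        (∑ i, (1 / z i) / ∑ j, 1 / z j) = 1) ∧
      z = (fun i => (∑ j, 1 / z j)⁻¹ / ((1 / z i) / ∑ j, 1 / z j)) ∧
      VaR P (fun ω => cheb (fw Y C ω) (fun i => (1 / z i) / ∑ j, 1 / z j)) α =
        (∑ j, 1 / z j)⁻¹) := by
  haveI : Nonempty (Fin M) := ⟨⟨0, hM⟩⟩
  constructor
  · intro h0 w hw hw1
    exact var_cheb_key P hM (fw Y C) α 0 h0 w hw 0 (fun i => by simp)
  · intro z hz hzpos
    have hs : 0 < ∑ j, 1 / z j :=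
      Finset.sum_pos (fun j _ => one_div_pos.mpr (hzpos j)) Finset.univ_nonempty
    have hwpos : ∀ i, 0 < (1 / z i) / ∑ j, 1 / z j := fun i =>
      div_pos (one_div_pos.mpr (hzpos i)) hs
    refine ⟨⟨hwpos, ?_⟩, ?_, ?_⟩
    · rw [← Finset.sum_div]
      exact div_self hs.ne'
    · funext i
      have := (hzpos i).ne'
      field_simp
    · refine var_cheb_key P hM (fw Y C) α z hz _ hwpos _ (fun i => ?_)
      have := (hzpos i).ne'
      field_simp
end

section
/- Let X be a nonempty set and for each x ∈ X let Y_x : Ω → ℝ^M and C_x : Ω → ℝ^V be measurable random vectors, with W_x the feasibility-weighted random vector obtained from Y_x and C_x. Let α ∈ (0, 1] and suppose z belongs to the global constrained MVaR over X and has all coordinates strictly positive. Define w ∈ Δ_+^{M-1} by w_i = (1/z_i)/(∑_{j=1}^M 1/z_j), and let X_z* = {x ∈ X : z ∈ MVaR_α(W_x)}. Then for every x ∈ X_z*, VaR_α(s[W_x, w]) = (∑_{j=1}^M 1/z_j)^{-1}, and for every x' ∈ X, VaR_α(s[W_{x'}, w]) ≤ VaR_α(s[W_x, w]); that is, every x ∈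 X_z* maximizes x ↦ VaR_α(s[W_x, w]) over X. -/
open MeasureTheory

lemma measurable_fw' {Ω : Type*} {M V : ℕ} [MeasurableSpace Ω] {Y : Ω → Fin M → ℝ}
    {C : Ω → Fin V → ℝ} (hY : Measurable Y) (hC : Measurable C) : Measurable (fw Y C) := by
  classical
  have hset : MeasurableSet {ω | ∀ j, 0 < C ω j} := by
    have h : {ω | ∀ j, 0 < C ω j} = ⋂ j, {ω | 0 < C ω j} := by
      ext ω; simp [Set.mem_iInter]
    rw [h]
    exact MeasurableSet.iInter fun j =>
      measurableSet_lt measurable_const ((measurable_pi_apply j).comp hC)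
  have h2 : fw Y C = fun ω => if ∀ j, 0 < C ω j then Y ω else 0 := by
    funext ω i
    simp only [fw]
    by_cases h : ∀ j, 0 < C ω j <;> simp [h]
  rw [h2]
  exact Measurable.ite hset hY measurable_const

lemma measurableSet_ge' {Ω : Type*} {M : ℕ} [MeasurableSpace Ω] {W : Ω → Fin M → ℝ}
    (hW : Measurable W) (a : Fin M → ℝ) : MeasurableSet {ω | ∀ i, a i ≤ W ω i} := by
  have h : {ω | ∀ i, a i ≤ W ω i} = ⋂ i, {ω | a i ≤ W ω i} := by
    ext ω; simp [Set.mem_iInter]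
  rw [h]
  exact MeasurableSet.iInter fun i =>
    measurableSet_le measurable_const ((measurable_pi_apply i).comp hW)

lemma aset_coord_bdd {Ω : Type*} {M : ℕ} [MeasurableSpace Ω] (P : Measure Ω)
    [IsProbabilityMeasure P] {W : Ω → Fin M → ℝ} (hW : Measurable W) {α : ℝ} (hα0 : 0 < α)
    (i : Fin M) : ∃ B : ℝ, ∀ a ∈ Aset P W α, a i ≤ B := by
  set s : ℕ → Set Ω := fun n => {ω | (n : ℝ) ≤ W ω i} with hs
  have hsm : ∀ n, NullMeasurableSet (s n) P := fun n =>
    (measurableSet_le measurable_const ((measurable_pi_apply i).comp hW)).nullMeasurableSet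
  have hanti : Antitone s := fun n m hnm ω hω => le_trans ((Nat.cast_le (α := ℝ)).mpr hnm) hω
  have hempty : (⋂ n, s n) = ∅ := by
    ext ω
    simp only [Set.mem_iInter, Set.mem_empty_iff_false, iff_false, not_forall]
    obtain ⟨n, hn⟩ := exists_nat_gt (W ω i)
    exact ⟨n, by simp [hs]; linarith⟩
  have htend := tendsto_measure_iInter_atTop (μ := P) hsm hanti ⟨0, measure_ne_top P _⟩
  rw [hempty, measure_empty] at htend
  have hev := htend.eventually_lt_const (ENNReal.ofReal_pos.mpr hα0)
  obtain ⟨n, hn⟩ := hev.exists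
  refine ⟨n, fun a ha => ?_⟩
  by_contra hlt
  push_neg at hlt
  have hsub : {ω | ∀ j, a j ≤ W ω j} ⊆ s n := fun ω hω => le_trans hlt.le (hω i)
  exact absurd (le_trans ha (measure_mono hsub)) (not_le.mpr hn)

lemma exists_mvar_ge {Ω : Type*} {M : ℕ} [MeasurableSpace Ω] (P : Measure Ω)
    [IsProbabilityMeasure P] {W : Ω → Fin M → ℝ} (hW : Measurable W) {α : ℝ} (hα0 : 0 < α)
    {z' : Fin M → ℝ} (hz' : z' ∈ Aset P W α) : ∃ m ∈ MVaRset P W α, z' ≤ m := by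
  classical
  choose B hB using fun i => aset_coord_bdd P hW hα0 i
  have zorn := zorn_le_nonempty₀ (Aset P W α) ?_ z' hz'
  · obtain ⟨m, hz'm, hmax⟩ := zorn
    refine ⟨m, ⟨hmax.1, fun a ha hdom => ?_⟩, hz'm⟩
    obtain ⟨j, hj⟩ := hdom.2
    exact absurd (hmax.2 ha (fun i => hdom.1 i) j) (not_le.mpr hj)
  · intro c hcs hchain y hy
    set u : Fin M → ℝ := fun i => sSup ((fun a => a i) '' c) with hu
    have hne : ∀ i, ((fun a => a i) '' c).Nonempty := fun i => ⟨y i, y, hy, rfl⟩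
    have hbdd : ∀ i, BddAbove ((fun a => a i) '' c) := by
      intro i
      refine ⟨B i, ?_⟩
      rintro _ ⟨a, hac, rfl⟩
      exact hB i a (hcs hac)
    have hub : ∀ a ∈ c, a ≤ u := fun a ha i => le_csSup (hbdd i) ⟨a, ha, rfl⟩
    have hsel : ∀ n : ℕ, ∃ b ∈ c, ∀ i, u i - 1 / (n + 1) < b i := by
      intro n
      have hei : ∀ i, ∃ e ∈ c, u i - 1 / (n + 1) < e i := by
        intro i
        have hpos : (0 : ℝ) < 1 / (n + 1) := by positivity
        have hlt : u i - 1 / (n + 1) < u i := by linarith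
        obtain ⟨_, ⟨e, hec, rfl⟩, hlt'⟩ := exists_lt_of_lt_csSup (hne i) hlt
        exact ⟨e, hec, hlt'⟩
      choose e he hlt using hei
      rcases isEmpty_or_nonempty (Fin M) with hM0 | hM0
      · exact ⟨y, hy, fun i => (hM0.false i).elim⟩
      · haveI : Nonempty ↥c := ⟨⟨y, hy⟩⟩
        haveI : IsDirected ↥c (· ≤ ·) := ⟨fun a b => by
          rcases hchain.total a.2 b.2 with h | h
          exacts [⟨b, h, le_rfl⟩, ⟨a, le_rfl, h⟩]⟩
        obtain ⟨Mx, hMx⟩ := (Finset.univ.image (fun i => (⟨e i, he i⟩ : ↥c))).exists_le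
        refine ⟨Mx.1, Mx.2, fun i => lt_of_lt_of_le (hlt i) ?_⟩
        exact hMx _ (Finset.mem_image_of_mem _ (Finset.mem_univ i)) i
    choose b hbc hblt using hsel
    set T : ℕ → Set Ω := fun n => {ω | ∀ i, b n i ≤ W ω i} with hT
    have hTm : ∀ n, NullMeasurableSet (T n) P := fun n =>
      (measurableSet_ge' hW (b n)).nullMeasurableSet
    have hTdir : Directed (· ⊇ ·) T := by
      intro n m
      rcases hchain.total (hbc n) (hbc m) with h | h
      · exact ⟨m, fun ω hω i => le_trans (h i) (hω i), subset_rfl⟩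
      · exact ⟨n, subset_rfl, fun ω hω i => le_trans (h i) (hω i)⟩
    have hcount := Directed.measure_iInter (μ := P) hTm hTdir ⟨0, measure_ne_top P _⟩
    have hα_le : ENNReal.ofReal α ≤ P (⋂ n, T n) := by
      rw [hcount]
      exact le_iInf fun n => hcs (hbc n)
    have hsub : (⋂ n, T n) ⊆ {ω | ∀ i, u i ≤ W ω i} := by
      intro ω hω i
      by_contra hlt
      push_neg at hlt
      obtain ⟨n, hn⟩ := exists_nat_one_div_lt (sub_pos.mpr hlt)
      have h1 : b n i ≤ W ω i := (Set.mem_iInter.mp hω n) i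
      have h2 := hblt n i
      linarith
    exact ⟨u, le_trans hα_le (measure_mono hsub), hub⟩

/-- Constrained consistent optimizers: if `z` belongs to the global
constrained `MVaR` over a family `{(Y_x, C_x)}` with feasibility-weighted vectors `W_x`
(i.e. `z ∈ ⋃ x, MVaR_α(W_x)` and `z` is not Pareto-dominated by any element of that
union) and has strictly positive coordinates, then with `w i = (1 / z i) / ∑ j, 1 / z j`,
every `x` with `z ∈ MVaR_α(W_x)` achieves `VaR_α(s[W_x, w]) = (∑ j, 1 / z j)⁻¹` and
maximizes `x ↦ VaR_α(s[W_x, w])` over `X`. -/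
theorem stmt_14 {Ω X : Type*} [MeasurableSpace Ω] (P : Measure Ω) [IsProbabilityMeasure P]
    [Nonempty X] {M V : ℕ} (hM : 1 ≤ M) (hV : 1 ≤ V)
    (Y : X → Ω → Fin M → ℝ) (hY : ∀ x, Measurable (Y x))
    (C : X → Ω → Fin V → ℝ) (hC : ∀ x, Measurable (C x))
    (α : ℝ) (hα0 : 0 < α) (hα1 : α ≤ 1)
    (z : Fin M → ℝ)
    (hzU : z ∈ ⋃ x, MVaRset P (fw (Y x) (C x)) α)
    (hznd : ∀ z' ∈ ⋃ x, MVaRset P (fw (Y x) (C x)) α, ¬ ParetoDom z' z)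
    (hzpos : ∀ i, 0 < z i)
    (w : Fin M → ℝ) (hw : w = fun i => (1 / z i) / ∑ j, 1 / z j) :
    ∀ x, z ∈ MVaRset P (fw (Y x) (C x)) α →
      VaR P (fun ω => cheb (fw (Y x) (C x) ω) w) α = (∑ j, 1 / z j)⁻¹ ∧
      ∀ x', VaR P (fun ω => cheb (fw (Y x') (C x') ω) w) α ≤
        VaR P (fun ω => cheb (fw (Y x) (C x) ω) w) α := by
  haveI : NeZero M := ⟨by omega⟩
  haveI hMne : Nonempty (Fin M) := Fin.pos_iff_nonempty.mp hM
  set S : ℝ := ∑ j, 1 / z j with hS_def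
  have hS : 0 < S :=
    Finset.sum_pos (fun j _ => by have := hzpos j; positivity) Finset.univ_nonempty
  -- key equivalence
  have hkey : ∀ (v : Fin M → ℝ) (t : ℝ), t ≤ cheb v w ↔ ∀ i, t * S * z i ≤ v i := by
    intro v t
    rw [cheb, le_ciInf_iff (Set.finite_range _).bddBelow]
    refine forall_congr' fun i => ?_
    have hz := hzpos i
    have hwv : w i * v i = v i / (z i * S) := by
      rw [hw]; field_simp
    rw [hwv, le_div_iff₀ (by positivity)]
    constructor <;> intro h <;> nlinarith
  have hsetEq : ∀ (x : X) (t : ℝ),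
      {ω | t ≤ cheb (fw (Y x) (C x) ω) w} = {ω | ∀ i, t * S * z i ≤ fw (Y x) (C x) ω i} := by
    intro x t
    ext ω
    exact hkey _ t
  have hTiff : ∀ (x : X) (t : ℝ),
      (ENNReal.ofReal α ≤ P {ω | t ≤ cheb (fw (Y x) (C x) ω) w}) ↔
        (fun i => t * S * z i) ∈ Aset P (fw (Y x) (C x)) α := by
    intro x t
    rw [hsetEq x t]
    rfl
  -- upper bound for all x'
  have hub : ∀ (x' : X) (t : ℝ),
      ENNReal.ofReal α ≤ P {ω | t ≤ cheb (fw (Y x') (C x') ω) w} → t ≤ 1 / S := by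
    intro x' t ht
    by_contra hgt
    push_neg at hgt
    have hz'A := (hTiff x' t).mp ht
    obtain ⟨m, hmM, hmge⟩ := exists_mvar_ge P (measurable_fw' (hY x') (hC x')) hα0 hz'A
    refine hznd m (Set.mem_iUnion.mpr ⟨x', hmM⟩) ?_
    have h1 : 1 < t * S := by
      have := mul_lt_mul_of_pos_right hgt hS
      rwa [one_div_mul_cancel hS.ne'] at this
    have hcoord : ∀ i, z i < t * S * z i := by
      intro i
      have := mul_lt_mul_of_pos_right h1 (hzpos i)
      linarith
    obtain ⟨i0⟩ := hMne
    exact ⟨fun i => (hcoord i).le.trans (hmge i), i0, lt_of_lt_of_le (hcoord i0) (hmge i0)⟩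
  intro x hx
  have hmem : ENNReal.ofReal α ≤ P {ω | 1 / S ≤ cheb (fw (Y x) (C x) ω) w} := by
    rw [hTiff x (1 / S)]
    have heq : (fun i => 1 / S * S * z i) = z := by
      funext i
      rw [one_div_mul_cancel hS.ne', one_mul]
    rw [heq]
    exact hx.1
  have hEq : VaR P (fun ω => cheb (fw (Y x) (C x) ω) w) α = 1 / S := by
    apply le_antisymm
    · exact Real.sSup_le (fun t ht => hub x t ht) (by positivity)
    · exact le_csSup ⟨1 / S, fun t ht => hub x t ht⟩ hmem
  refine ⟨by rw [hEq, one_div], fun x' => ?_⟩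
  rw [hEq]
  exact Real.sSup_le (fun t ht => hub x' t ht) (by positivity)
end
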